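/- arXiv:2603.13863 — 2 statements merged into one kernel-verified Lean document; each statement's English description precedes it below -/
import Mathlib

section
/- Let d = xy and let |ψ_{ms}⟩ = (1/√x) ∑_{k=0}^{x-1} ω_x^{sk} |a_{ky+m}⟩ for m ∈ Z_y, s ∈ Z_x, where {|a_i⟩} is the standard basis of ℂ^d and |b_j⟩ = (1/√d)∑_i ω_d^{ij}|a_i⟩. Then each |ψ_{ms}⟩ is a unit vector whose Kirkwood-Dirac distribution Q_{ij} = ⟨a_i|ψ_{ms}⟩⟨ψ_{ms}|b_j⟩⟨b_j|a_i⟩ is nonnegative for all i, j; i.e., |ψ_{ms}⟩ is a KD-classical pure state. -/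
/-!
Write `d = x * y` and index `Fin d` by pairs `(k, r) ∈ Fin x × Fin y` via `t = r + y * k`;
`ψ = ψ_{ms}` lives on the residue class `r = m`, where `ψ(k) = ω_x^{sk} / √x`.
This gives `‖ψ‖² = x · (1/x) = 1`. With `f l = conj (ψ l) · b_j l` the KD entry is
`Q_{ij} = conj (f i) · ∑ₗ f l`, and on the support `f = c^k · z`, where `c = ω_x^j · conj ω_x^s`
is an `x`-th root of unity (because `ω_d^y = ω_x`). If `c = 1`, `f` only takes the values
`0` and `z`, so `Q_{ij} = (#supp f) |z|² ≥ 0`; otherwise `∑ₗ f l = z ∑_{k<x} c^k = 0`.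
-/

open Finset Complex
open scoped ComplexOrder

/-- ω_n = e^{2πi/n} -/
noncomputable def ww (n : ℕ) : ℂ := Complex.exp (2 * Real.pi * Complex.I / n)

/-- |ψ_{m,s}⟩ = (1/√x) ∑_{k<x} ω_x^{sk} |a_{ky+m}⟩ in ℂ^d (standard basis coords). -/
noncomputable def psi (d x y m s : ℕ) : Fin d → ℂ :=
  fun t => (1 / Real.sqrt x) *
    ∑ k ∈ Finset.range x, ww x ^ (s * k) * (if (t : ℕ) = k * y + m then 1 else 0)

/-- Fourier basis vector |b_j⟩, coordinates in the standard basis. -/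
noncomputable def bvec (d j : ℕ) : Fin d → ℂ :=
  fun i => ww d ^ ((i : ℕ) * j) / Real.sqrt d

/-- rank one projection |v⟩⟨v| as a matrix. -/
noncomputable def proj {d : ℕ} (v : Fin d → ℂ) : Matrix (Fin d) (Fin d) ℂ :=
  fun i j => v i * (starRingEnd ℂ) (v j)

/-- KD quasiprobability Q_{ij}(ρ) = ⟨a_i|ρ|b_j⟩⟨b_j|a_i⟩ (standard/Fourier bases). -/
noncomputable def KD {d : ℕ} (ρ : Matrix (Fin d) (Fin d) ℂ) (i j : Fin d) : ℂ :=
  (∑ l, ρ i l * bvec d (j : ℕ) l) * (starRingEnd ℂ) (bvec d (j : ℕ) i)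

/-- The set of KD-classical pure-state projections for the DFT pair in dimension d. -/
def pureKD (d : ℕ) : Set (Matrix (Fin d) (Fin d) ℂ) :=
  {M | ∃ x y m s : ℕ, x * y = d ∧ m < y ∧ s < x ∧ M = proj (psi d x y m s)}

open ComplexConjugate

lemma ww_pow_self (n : ℕ) : ww n ^ n = 1 := by
  rcases eq_or_ne n 0 with rfl | hn
  · exact pow_zero _
  · exact (isPrimitiveRoot_exp n hn).pow_eq_one

lemma norm_ww (n : ℕ) : ‖ww n‖ = 1 := by
  simp [ww, Complex.norm_exp]

lemma ww_mul_pow_right (x : ℕ) {y : ℕ} (hy : y ≠ 0) : ww (x * y) ^ y = ww x := by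
  rw [ww, ww, ← Complex.exp_nat_mul]
  congr 1
  push_cast
  field_simp

lemma star_mul_sum_nonneg_of_forall_eq_zero_or_eq {ι : Type*} [Fintype ι] {f : ι → ℂ} {z : ℂ}
    (hf : ∀ l, f l = 0 ∨ f l = z) (i : ι) : 0 ≤ conj (f i) * ∑ l, f l := by
  classical
  have hsum : ∑ l, f l = (#{l | f l ≠ 0} : ℝ) * z := by
    rw [Finset.card_filter, Nat.cast_sum, Complex.ofReal_sum, Finset.sum_mul]
    refine Finset.sum_congr rfl fun l _ => ?_
    rcases hf l with h | rfl
    · simp [h]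
    · by_cases h0 : f l = 0 <;> simp [h0]
  rcases hf i with h | h
  · simp [h]
  · rw [h, hsum, mul_left_comm, Complex.conj_mul', ← Complex.ofReal_pow, ← Complex.ofReal_mul]
    exact Complex.zero_le_real.2 (by positivity)

lemma ww_pow_mul_conj_pow_pow_self (n a b : ℕ) : (ww n ^ a * conj (ww n) ^ b) ^ n = 1 := by
  rw [mul_pow, ← pow_mul, ← pow_mul, mul_comm a, mul_comm b, pow_mul, pow_mul, ← map_pow,
    ww_pow_self, map_one, one_pow, one_pow, one_mul]

variable {x y m : ℕ}

lemma finProdFinEquiv_val_eq_iff (hm : m < y) (k : Fin x) (r : Fin y) (k' : ℕ) :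
    ((finProdFinEquiv (k, r) : Fin (x * y)) : ℕ) = k' * y + m ↔ (r : ℕ) = m ∧ (k : ℕ) = k' := by
  simp only [finProdFinEquiv_apply_val]
  constructor
  · intro h
    have hr : (r : ℕ) = m := by
      simpa [Nat.add_mul_mod_self_left, Nat.mod_eq_of_lt r.isLt, Nat.mod_eq_of_lt hm]
        using congrArg (· % y) h
    rw [hr] at h
    exact ⟨hr, Nat.eq_of_mul_eq_mul_left (by omega : 0 < y) (by linarith)⟩
  · rintro ⟨rfl, rfl⟩
    ring

lemma psi_finProdFinEquiv (s : ℕ) (hm : m < y) (k : Fin x) (r : Fin y) :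
    psi (x * y) x y m s (finProdFinEquiv (k, r))
      = if (r : ℕ) = m then ww x ^ (s * k) / √x else 0 := by
  simp only [psi, finProdFinEquiv_val_eq_iff hm]
  by_cases hr : (r : ℕ) = m
  · simp [hr, Finset.sum_ite_eq, k.isLt, div_eq_inv_mul]
  · simp [hr]

lemma sum_eq_sum_residue_class {M : Type*} [AddCommMonoid M] (hm : m < y) (f : Fin (x * y) → M)
    (hf : ∀ k (r : Fin y), (r : ℕ) ≠ m → f (finProdFinEquiv (k, r)) = 0) :
    ∑ t, f t = ∑ k : Fin x, f (finProdFinEquiv (k, ⟨m, hm⟩)) := by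
  rw [← finProdFinEquiv.sum_comp, Fintype.sum_prod_type]
  refine Finset.sum_congr rfl fun k _ => Fintype.sum_eq_single _ fun r hr => hf k r ?_
  exact fun h => hr (Fin.ext h)

lemma sum_normSq_psi (s : ℕ) (hx : 0 < x) (hm : m < y) :
    ∑ t, normSq (psi (x * y) x y m s t) = 1 := by
  rw [sum_eq_sum_residue_class hm _ fun k r hr => by
    rw [psi_finProdFinEquiv s hm, if_neg hr, map_zero]]
  have hx' : (x : ℝ) ≠ 0 := by positivity
  simp [psi_finProdFinEquiv s hm, Complex.normSq_eq_norm_sq, norm_ww, hx']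

lemma star_psi_mul_bvec (s j : ℕ) (hm : m < y) (k : Fin x) :
    conj (psi (x * y) x y m s (finProdFinEquiv (k, ⟨m, hm⟩)))
        * bvec (x * y) j (finProdFinEquiv (k, ⟨m, hm⟩))
      = (ww x ^ j * conj (ww x) ^ s) ^ (k : ℕ) * (ww (x * y) ^ (m * j) / (√x * √(x * y : ℕ))) := by
  rw [psi_finProdFinEquiv s hm, if_pos rfl]
  simp only [bvec, finProdFinEquiv_apply_val, map_div₀, map_pow, Complex.conj_ofReal]
  rw [show (m + y * k) * j = m * j + y * (k * j) by ring, pow_add, pow_mul (ww (x * y)) y,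
    ww_mul_pow_right x (by omega : y ≠ 0)]
  ring

theorem psi_unit_and_KD_classical_general (d x y m s : ℕ) (hd : d = x * y)
    (hx : 0 < x) (hm : m < y) :
    (∑ t, Complex.normSq (psi d x y m s t)) = 1 ∧
    ∀ i j : Fin d,
      0 ≤ psi d x y m s i *
          (∑ l, (starRingEnd ℂ) (psi d x y m s l) * bvec d (j : ℕ) l) *
          (starRingEnd ℂ) (bvec d (j : ℕ) i) := by
  subst hd
  refine ⟨sum_normSq_psi s hx hm, fun i j => ?_⟩
  set f : Fin (x * y) → ℂ := fun l => conj (psi (x * y) x y m s l) * bvec (x * y) j l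
  set c := ww x ^ (j : ℕ) * conj (ww x) ^ s
  set z := ww (x * y) ^ (m * j) / (√x * √(x * y : ℕ))
  have hf_off : ∀ k (r : Fin y), (r : ℕ) ≠ m → f (finProdFinEquiv (k, r)) = 0 := by
    intro k r hr
    simp only [f, psi_finProdFinEquiv s hm, if_neg hr, map_zero, zero_mul]
  rw [show psi (x * y) x y m s i * (∑ l, f l) * conj (bvec (x * y) j i)
      = conj (f i) * ∑ l, f l by simp only [f, map_mul, Complex.conj_conj]; ring]
  by_cases hc : c = 1
  · refine star_mul_sum_nonneg_of_forall_eq_zero_or_eq (z := z) (fun l => ?_) i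
    obtain ⟨⟨k, r⟩, rfl⟩ := finProdFinEquiv.surjective l
    by_cases hr : (r : ℕ) = m
    · obtain rfl : r = ⟨m, hm⟩ := Fin.ext hr
      simp [f, star_psi_mul_bvec s j hm, c, z, hc]
    · exact .inl (hf_off k r hr)
  · have hsum : ∑ l, f l = (∑ k ∈ range x, c ^ k) * z := by
      rw [sum_eq_sum_residue_class hm f hf_off, Finset.sum_mul, ← Fin.sum_univ_eq_sum_range]
      exact Finset.sum_congr rfl fun k _ => star_psi_mul_bvec s j hm k
    rw [hsum, geom_sum_eq hc, ww_pow_mul_conj_pow_pow_self]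
    simp

/-- |ψ_{ms}⟩ is a unit vector and its KD distribution
    Q_{ij} = ⟨a_i|ψ⟩⟨ψ|b_j⟩⟨b_j|a_i⟩ is nonnegative (real ≥ 0) for all i, j. -/
theorem psi_unit_and_KD_classical (d x y m s : ℕ) (hd : d = x * y)
    (hx : 0 < x) (hy : 0 < y) (hm : m < y) (hs : s < x) :
    (∑ t, Complex.normSq (psi d x y m s t)) = 1 ∧
    ∀ i j : Fin d,
      0 ≤ psi d x y m s i *
          (∑ l, (starRingEnd ℂ) (psi d x y m s l) * bvec d (j : ℕ) l) *
          (starRingEnd ℂ) (bvec d (j : ℕ) i) :=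
  psi_unit_and_KD_classical_general d x y m s hd hx hm
end

section
/- Let d = xy = x̃ỹ with x = x̃ p for a prime p dividing x (so ỹ = yp). For the KD-classical pure projections ψ_{ms} (factorization d = xy) and ψ_{m̃s̃} (factorization d = x̃ỹ) with m̃ = m + (i)_{top} and s = s̃ + (j)_{top} related by adding one p-adic digit, one has the operator identity ∑_{digit j over Z_p} ψ_{m,s(j)} = ∑_{digit i over Z_p} ψ_{m̃(i),s̃}, where s(j) and m̃(i) range as the respective p-adic digit varies over Z_p. -/
open Finset Complex
open scoped ComplexOrder

/-!
Work entrywise in the standard basis, writing indices as `t = a y + r` and `t' = b y + r'`.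
The projection onto `ψ_{m,s}` is supported on `r = r' = m`, where its entry is
`ω_x^{s (a - b)} / x`. Shifting `s` by `j (x / p) c` with `p ∤ c` multiplies this entry by
`ω_p^{j c (a - b)}`, so the sum over `j` keeps exactly the entries with `a ≡ b (mod p)`, multiplied
by `p`. On the other side the offsets `m + i y w mod y p` with `p ∤ w` run through all residues
mod `y p` lying over `m`, so that sum keeps exactly the entries with `t ≡ t' (mod y p)`, which
again means `a ≡ b (mod p)`.
-/

theorem Finset.sum_range_mul_mod {M : Type*} [AddCommMonoid M] {n w : ℕ} (hw : n.Coprime w)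
    (f : ℕ → M) : ∑ i ∈ range n, f (i * w % n) = ∑ i ∈ range n, f i := by
  have hinj : Set.InjOn (fun i => i * w % n) (range n) := fun i hi j hj hij => by
    simpa [Nat.ModEq, Nat.mod_eq_of_lt (mem_range.mp hi), Nat.mod_eq_of_lt (mem_range.mp hj)]
      using Nat.ModEq.cancel_right_of_coprime hw hij
  have himage : (range n).image (fun i => i * w % n) = range n :=
    eq_of_subset_of_card_le
      (image_subset_iff.mpr fun i hi =>
        mem_range.mpr (Nat.mod_lt _ (Nat.zero_lt_of_lt (mem_range.mp hi))))
      (card_image_of_injOn hinj).ge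
  rw [← sum_image hinj, himage]

theorem Nat.mod_mul_eq_add_mul_iff {t y p m c : ℕ} (hm : m < y) :
    t % (y * p) = m + y * c ↔ t % y = m ∧ t / y % p = c := by
  have hy : 0 < y := Nat.zero_lt_of_lt hm
  rw [Nat.mod_mul]
  constructor
  · intro h
    have hmod := congrArg (· % y) h
    have hdiv := congrArg (· / y) h
    simp only [Nat.add_mul_mod_self_left, Nat.mod_mod, Nat.mod_eq_of_lt hm,
      Nat.add_mul_div_left _ _ hy, Nat.div_eq_of_lt hm, Nat.div_eq_of_lt (Nat.mod_lt _ hy)]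
      at hmod hdiv
    exact ⟨hmod, by simpa using hdiv⟩
  · rintro ⟨rfl, rfl⟩
    rfl

theorem Nat.pow_mul_inj_of_not_dvd {p k l m n : ℕ} (hp : p.Prime) (hm : ¬ p ∣ m)
    (hn : ¬ p ∣ n) (h : p ^ k * m = p ^ l * n) : k = l ∧ m = n := by
  obtain rfl : m = n := by
    rw [← Nat.ordCompl_pow_mul_of_not_dvd k hp hm, h, Nat.ordCompl_pow_mul_of_not_dvd l hp hn]
  have hm0 : 0 < m := Nat.pos_of_ne_zero fun h0 => hm (h0 ▸ dvd_zero p)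
  exact ⟨Nat.pow_right_injective hp.two_le (Nat.eq_of_mul_eq_mul_right hm0 h), rfl⟩

theorem Nat.exists_eq_pow_sub_mul_of_mul_eq_pow_mul {p r k x y u M : ℕ} (hp : p.Prime)
    (hxy : x * y = p ^ r * M) (hM : ¬ p ∣ M) (hx : x = p ^ k * u) (hu : ¬ p ∣ u) :
    k ≤ r ∧ ∃ v, y = p ^ (r - k) * v ∧ M = u * v := by
  have hy : y ≠ 0 := by
    rintro rfl
    rw [mul_zero, eq_comm, mul_eq_zero] at hxy
    exact hM (hxy.resolve_left (pow_ne_zero _ hp.ne_zero) ▸ dvd_zero p)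
  obtain ⟨e, v, hv, rfl⟩ := Nat.exists_eq_pow_mul_and_not_dvd hy p hp.ne_one
  obtain ⟨he, huv⟩ := Nat.pow_mul_inj_of_not_dvd (k := k + e) (m := u * v) hp
    (by rw [hp.dvd_mul]; tauto) hM (by rw [← hxy, hx]; ring)
  exact ⟨by omega, v, by rw [← he, Nat.add_sub_cancel_left], huv.symm⟩

theorem IsPrimitiveRoot.zpow_eq_zpow_of_modEq {G₀ : Type*} [CommGroupWithZero G₀] {ζ : G₀}
    {n : ℕ} (h : IsPrimitiveRoot ζ n) (hn : n ≠ 0) {a b : ℤ} (hab : a ≡ b [ZMOD n]) :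
    ζ ^ a = ζ ^ b := by
  have hζ : ζ ≠ 0 := h.ne_zero hn
  rw [← div_eq_one_iff_eq (zpow_ne_zero b hζ), ← zpow_sub₀ hζ, h.zpow_eq_one_iff_dvd]
  exact hab.symm.dvd

theorem IsPrimitiveRoot.sum_range_zpow_mul {K : Type*} [Field K] {ζ : K} {n : ℕ}
    (h : IsPrimitiveRoot ζ n) (k : ℤ) :
    ∑ j ∈ range n, ζ ^ (k * j) = if (n : ℤ) ∣ k then (n : K) else 0 := by
  simp_rw [zpow_mul, zpow_natCast]
  split_ifs with hk
  · simp [(h.zpow_eq_one_iff_dvd k).mpr hk]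
  · have hpow : (ζ ^ k) ^ n = 1 := by
      rw [← zpow_natCast, ← zpow_mul, mul_comm, zpow_mul, h.zpow_eq_one, one_zpow]
    rw [geom_sum_eq (mt (h.zpow_eq_one_iff_dvd k).mp hk), hpow, sub_self, zero_div]

lemma ww_ne_zero (n : ℕ) : ww n ≠ 0 := Complex.exp_ne_zero _

lemma ww_isPrimitiveRoot {n : ℕ} (hn : n ≠ 0) : IsPrimitiveRoot (ww n) n :=
  Complex.isPrimitiveRoot_exp n hn

lemma ww_mul_pow_left {a : ℕ} (ha : a ≠ 0) (b : ℕ) : ww (a * b) ^ a = ww b := by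
  rw [ww, ww, ← Complex.exp_nat_mul, Nat.cast_mul, mul_div_assoc',
    mul_div_mul_left _ _ (Nat.cast_ne_zero.mpr ha)]

lemma conj_ww (n : ℕ) : starRingEnd ℂ (ww n) = (ww n)⁻¹ := by
  rw [ww, ← Complex.exp_conj, ← Complex.exp_neg]
  simp [Complex.conj_ofNat, neg_div]

lemma ww_mul_zpow_of_mod_eq {p : ℕ} (hp : p ≠ 0) (n : ℕ) {a b : ℕ} (hab : a % p = b % p)
    (s : ℤ) :
    ww (p * n) ^ (s * (a - b : ℤ)) = ww n ^ (s * ((a / p : ℕ) - (b / p : ℕ) : ℤ)) := by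
  have ha : (p * (a / p : ℕ) + (a % p : ℕ) : ℤ) = a := by exact_mod_cast Nat.div_add_mod a p
  have hb : (p * (b / p : ℕ) + (b % p : ℕ) : ℤ) = b := by exact_mod_cast Nat.div_add_mod b p
  have hab' : ((a % p : ℕ) : ℤ) = (b % p : ℕ) := congrArg _ hab
  have hsub : (a - b : ℤ) = p * ((a / p : ℕ) - (b / p : ℕ) : ℤ) := by
    linear_combination hb - ha + hab'
  rw [hsub, mul_left_comm, zpow_mul, zpow_natCast, ww_mul_pow_left hp]

lemma psi_apply {d x y m : ℕ} (s : ℕ) (hd : d = x * y) (hm : m < y) (t : Fin d) :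
    psi d x y m s t =
      if (t : ℕ) % y = m then (Real.sqrt x : ℂ)⁻¹ * ww x ^ (s * ((t : ℕ) / y)) else 0 := by
  have hy : 0 < y := Nat.zero_lt_of_lt hm
  have hindex : ∀ k, (t : ℕ) = k * y + m ↔ (t : ℕ) % y = m ∧ (t : ℕ) / y = k := fun k => by
    rw [and_comm, Nat.div_mod_unique hy]
    constructor
    · intro h; exact ⟨by rw [h]; ring, hm⟩
    · rintro ⟨h, -⟩; rw [← h]; ring
  have hlt : (t : ℕ) / y < x := (Nat.div_lt_iff_lt_mul hy).mpr (hd ▸ t.isLt)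
  simp only [psi, hindex, ite_and, mul_ite, mul_one, mul_zero]
  split_ifs <;> simp [Finset.sum_ite_eq, hlt]

lemma proj_psi_apply {d x y m : ℕ} (s : ℕ) (hd : d = x * y) (hm : m < y) (t t' : Fin d) :
    proj (psi d x y m s) t t' =
      if (t : ℕ) % y = m ∧ (t' : ℕ) % y = m then
        (x : ℂ)⁻¹ * ww x ^ ((s : ℤ) * (((t : ℕ) / y : ℕ) - ((t' : ℕ) / y : ℕ) : ℤ))
      else 0 := by
  have hsqrt : (Real.sqrt x : ℂ)⁻¹ * (Real.sqrt x : ℂ)⁻¹ = (x : ℂ)⁻¹ := by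
    rw [← mul_inv, ← Complex.ofReal_mul, Real.mul_self_sqrt (Nat.cast_nonneg x),
      Complex.ofReal_natCast]
  have hphase : ∀ a b : ℕ, ww x ^ (s * a) * (ww x)⁻¹ ^ (s * b) = ww x ^ ((s : ℤ) * (a - b)) :=
    fun a b => by
      rw [mul_sub, zpow_sub₀ (ww_ne_zero x), inv_pow, div_eq_mul_inv]
      norm_cast
  rw [proj, psi_apply s hd hm, psi_apply s hd hm]
  by_cases h : (t : ℕ) % y = m ∧ (t' : ℕ) % y = m
  · rw [if_pos h.1, if_pos h.2, if_pos h, map_mul, map_inv₀, Complex.conj_ofReal, map_pow,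
      conj_ww, ← hphase, ← hsqrt]
    ring
  · rw [if_neg h]
    split_ifs <;> simp_all

/-- The orthogonal projection onto the span of the `p` orthonormal vectors `ψ_{m + c y, s}`
(`c < p`) of the factorization `d = n · (y p)`. -/
noncomputable def digitBlock (d n y p m s : ℕ) : Matrix (Fin d) (Fin d) ℂ :=
  Matrix.of fun t t' =>
    if (t : ℕ) % y = m ∧ (t' : ℕ) % y = m ∧ (t : ℕ) / y % p = (t' : ℕ) / y % p then
      (n : ℂ)⁻¹ * ww n ^ ((s : ℤ) * (((t : ℕ) / y / p : ℕ) - ((t' : ℕ) / y / p : ℕ) : ℤ))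
    else 0

lemma sum_proj_psi_offset_digit_eq_digitBlock {d n y p w m s : ℕ} (hp : p.Prime)
    (hw : ¬ p ∣ w) (hd : d = n * (y * p)) (hm : m < y) :
    ∑ i ∈ range p, proj (psi d n (y * p) ((m + i * (y * w)) % (y * p)) s) =
      digitBlock d n y p m s := by
  have hdigit : ∀ i, (m + i * (y * w)) % (y * p) = m + y * (i * w % p) := fun i => by
    rw [Nat.mod_mul_eq_add_mul_iff hm, show i * (y * w) = y * (i * w) by ring,
      Nat.add_mul_div_left _ _ (Nat.zero_lt_of_lt hm), Nat.div_eq_of_lt hm, zero_add,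
      Nat.add_mul_mod_self_left, Nat.mod_eq_of_lt hm]
    exact ⟨rfl, rfl⟩
  simp_rw [hdigit]
  rw [Finset.sum_range_mul_mod (hp.coprime_iff_not_dvd.mpr hw)
    (fun c => proj (psi d n (y * p) (m + y * c) s))]
  ext t t'
  have hlt : ∀ c ∈ range p, m + y * c < y * p := fun c hc => by
    nlinarith [mem_range.mp hc]
  rw [Matrix.sum_apply, sum_congr rfl fun c hc => proj_psi_apply s hd (hlt c hc) t t']
  simp only [Nat.mod_mul_eq_add_mul_iff hm, ← Nat.div_div_eq_div_mul]
  have hcond : ∀ c, ((t % y = m ∧ t / y % p = c) ∧ t' % y = m ∧ t' / y % p = c) ↔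
      (t / y % p = c ∧ t % y = m ∧ t' % y = m ∧ t / y % p = t' / y % p) :=
    fun c => ⟨fun ⟨⟨h₁, h₂⟩, h₃, h₄⟩ => ⟨h₂, h₁, h₃, h₂.trans h₄.symm⟩,
      fun ⟨h₂, h₁, h₃, h₄⟩ => ⟨⟨h₁, h₂⟩, h₃, h₄.symm.trans h₂⟩⟩
  simp only [hcond, ite_and, Finset.sum_ite_eq, mem_range, Nat.mod_lt _ hp.pos, if_true,
    digitBlock, Matrix.of_apply]

lemma sum_proj_psi_phase_digit_eq_digitBlock {d n y p c m s : ℕ} (hp : p.Prime)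
    (hc : ¬ p ∣ c) (hd : d = p * n * y) (hn : n ≠ 0) (hm : m < y) :
    ∑ j ∈ range p, proj (psi d (p * n) y m ((s + j * (n * c)) % (p * n))) =
      digitBlock d n y p m s := by
  ext t t'
  rw [Matrix.sum_apply]
  simp only [proj_psi_apply _ hd hm, digitBlock, Matrix.of_apply]
  set a := (t : ℕ) / y
  set b := (t' : ℕ) / y
  by_cases hsupp : (t : ℕ) % y = m ∧ (t' : ℕ) % y = m
  swap
  · have hsupp' : ¬ ((t : ℕ) % y = m ∧ (t' : ℕ) % y = m ∧ a % p = b % p) :=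
      fun h => hsupp ⟨h.1, h.2.1⟩
    simp only [hsupp, hsupp', if_false, sum_const_zero]
  have hpn : p * n ≠ 0 := mul_ne_zero hp.ne_zero hn
  have hphase : ∀ j : ℕ, ww (p * n) ^ ((((s + j * (n * c)) % (p * n) : ℕ) : ℤ) * (a - b : ℤ)) =
      ww (p * n) ^ ((s : ℤ) * (a - b : ℤ)) * ww p ^ ((c * (a - b : ℤ)) * j) := fun j => by
    have hmod : (((s + j * (n * c)) % (p * n) : ℕ) : ℤ) ≡ (s + j * (n * c) : ℕ)
        [ZMOD (p * n : ℕ)] := by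
      rw [Int.natCast_mod]
      exact Int.mod_modEq _ _
    rw [(ww_isPrimitiveRoot hpn).zpow_eq_zpow_of_modEq hpn (hmod.mul_right _),
      ← ww_mul_pow_left hn p, mul_comm n p, ← zpow_natCast, ← zpow_mul,
      ← zpow_add₀ (ww_ne_zero _)]
    congr 1
    push_cast
    ring
  have hdvd : (p : ℤ) ∣ c * (a - b : ℤ) ↔ a % p = b % p := by
    rw [(Nat.prime_iff_prime_int.mp hp).dvd_mul, Int.natCast_dvd_natCast, ← Nat.modEq_iff_dvd]
    simp [hc, Nat.ModEq, eq_comm]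
  simp only [hsupp, and_self, true_and, if_true]
  rw [sum_congr rfl fun j _ => by rw [hphase j, ← mul_assoc], ← mul_sum,
    (ww_isPrimitiveRoot hp.ne_zero).sum_range_zpow_mul]
  by_cases hab : a % p = b % p
  · rw [if_pos (hdvd.mpr hab), if_pos hab, ← ww_mul_zpow_of_mod_eq hp.ne_zero n hab]
    have hp' : (p : ℂ) ≠ 0 := Nat.cast_ne_zero.mpr hp.ne_zero
    push_cast
    field_simp
  · rw [if_neg (mt hdvd.mp hab), if_neg hab, mul_zero]

theorem kd_pure_digit_identity_general_general (d x y p r1 rx M1 N1 m st : ℕ)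
    (hp : p.Prime) (hd : d = x * y)
    (hr1 : d = p ^ r1 * M1) (hM1 : ¬ p ∣ M1)
    (hrx : 1 ≤ rx) (hxdvd : p ^ rx ∣ x) (hxtop : ¬ p ∣ x / p ^ rx)
    (hN1 : M1 * N1 % p ^ r1 = 1 % p ^ r1)
    (hm : m < y) :
    ∑ j ∈ Finset.range p,
        proj (psi d x y m ((st + j * (p ^ (rx - 1) * M1 * N1)) % x))
    = ∑ i ∈ Finset.range p,
        proj (psi d (x / p) (y * p) ((m + i * (p ^ (r1 - rx) * M1 * N1)) % (y * p)) st) := by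
  obtain ⟨u, hxu⟩ := hxdvd
  rw [hxu, Nat.mul_div_cancel_left _ (pow_pos hp.pos _)] at hxtop
  obtain ⟨hrxr1, v, hyv, hM1uv⟩ :=
    Nat.exists_eq_pow_sub_mul_of_mul_eq_pow_mul hp (hd ▸ hr1) hM1 hxu hxtop
  have hpv : ¬ p ∣ v := fun h => hM1 (hM1uv ▸ h.mul_left u)
  have hpN1 : ¬ p ∣ N1 := by
    have hcop : N1.Coprime (p ^ r1) :=
      Nat.coprime_of_mul_modEq_one M1 (by rwa [mul_comm] at hN1)
    exact hp.coprime_iff_not_dvd.mp (hcop.coprime_dvd_right (dvd_pow_self p (by omega))).symm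
  set n := p ^ (rx - 1) * u
  have hx : x = p * n := by rw [hxu, ← mul_assoc, ← pow_succ', Nat.sub_add_cancel hrx]
  have hn : n ≠ 0 := mul_ne_zero (pow_ne_zero _ hp.ne_zero) fun h => hxtop (h ▸ dvd_zero p)
  rw [show p ^ (rx - 1) * M1 * N1 = n * (v * N1) by rw [hM1uv]; ring,
    show p ^ (r1 - rx) * M1 * N1 = y * (u * N1) by rw [hyv, hM1uv]; ring,
    hx, Nat.mul_div_cancel_left n hp.pos,
    sum_proj_psi_phase_digit_eq_digitBlock hp (by rw [hp.dvd_mul]; tauto) (by rw [hd, hx]) hn hm,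
    sum_proj_psi_offset_digit_eq_digitBlock hp (by rw [hp.dvd_mul]; tauto) (by rw [hd, hx]; ring)
      hm]

/-- Lemma, general d: for d = xy = x̃ỹ with x = x̃p, ỹ = yp,
    ∑_{j ∈ Z_p} ψ_{m, s̃ + j·p^{r_{(1,x)}-1}M₁N₁} = ∑_{i ∈ Z_p} ψ_{m + i·p^{r_{(1,y)}}M₁N₁, s̃}
    (as rank-one projections), where r₁ = v_p(d), r_{(1,x)} = v_p(x), r_{(1,y)} = r₁ - r_{(1,x)},
    M₁ = d/p^{r₁} and M₁N₁ ≡ 1 (mod p^{r₁}). -/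
theorem kd_pure_digit_identity_general (d x y p r1 rx M1 N1 m st : ℕ)
    (hp : p.Prime) (hd : d = x * y) (hx : 0 < x) (hy : 0 < y)
    (hr1 : d = p ^ r1 * M1) (hM1 : ¬ p ∣ M1)
    (hrx : 1 ≤ rx) (hxdvd : p ^ rx ∣ x) (hxtop : ¬ p ∣ x / p ^ rx)
    (hN1 : M1 * N1 % p ^ r1 = 1 % p ^ r1)
    (hm : m < y) (hst : st < x / p) :
    ∑ j ∈ Finset.range p,
        proj (psi d x y m ((st + j * (p ^ (rx - 1) * M1 * N1)) % x))
    = ∑ i ∈ Finset.range p,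
        proj (psi d (x / p) (y * p) ((m + i * (p ^ (r1 - rx) * M1 * N1)) % (y * p)) st) :=
  kd_pure_digit_identity_general_general d x y p r1 rx M1 N1 m st hp hd hr1 hM1 hrx hxdvd hxtop hN1
    hm
end
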